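/- arXiv:2306.07465 — 6 statements merged into one kernel-verified Lean document; each statement's English description precedes it below -/
import Mathlib

section
/- Let M and M' be two m-player finite-horizon Markov game models on the same finite state space S, finite joint action space A = A_1 × ⋯ × A_m, and horizon H, with mean rewards in [0,1]. If a joint Markov policy π satisfies CCEGap^M(π) ≤ ε, then CCEGap^{M'}(π) ≤ ε + 2H‖M − M'‖₁. -/
open Finset

/-- Value function of a joint Markov policy `π` in a finite-horizon Markov game / MDP with
horizon `H`, transitions `P` and mean rewards `R` (for one fixed player), written in terms of
the number `k` of remaining steps: `gval H P R π k s = V_{H+1-k}(s)`; with `k+1` steps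
remaining, the current step is `h = H - k`. The value of the game from the initial state `s₁`
is `gval H P R π H s₁`. -/
noncomputable def gval {S J : Type*} [Fintype S] [Fintype J] (H : ℕ)
    (P : ℕ → S → J → S → ℝ) (R : ℕ → S → J → ℝ) (π : ℕ → S → J → ℝ) : ℕ → S → ℝ
  | 0, _ => 0
  | k + 1, s => ∑ a, π (H - k) s a *
      (R (H - k) s a + ∑ s', P (H - k) s a s' * gval H P R π k s')

/-- The joint policy `(σ, π_{-i})`: player `i` plays `a_i ∼ σ_h(·|s)` independently, while the
other players play `a_{-i}` drawn from the marginal of the joint policy `π_h(·|s)` on `A_{-i}`. -/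
noncomputable def deviate {m : ℕ} {S : Type*} {A : Fin m → Type*} [∀ i, Fintype (A i)]
    (π : ℕ → S → ((j : Fin m) → A j) → ℝ) (i : Fin m) (σ : ℕ → S → A i → ℝ) :
    ℕ → S → ((j : Fin m) → A j) → ℝ :=
  fun h s a => σ h s (a i) * ∑ b : A i, π h s (Function.update a i b)

/-!
Simulation lemma: since values are bounded by the horizon `H`, the values of one policy in two
models differ by at most `Σ_h (δR_h + H δP_h) ≤ H ‖M - M'‖₁`, where `δR_h` and `δP_h` are the
step-`h` reward and transition discrepancies. A CCE gap is the difference of the values of a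
deviation `(σ, π_{-i})` and of `π`, so changing the model moves it by at most twice that.
-/

section WeightedSums

variable {ι : Type*} [Fintype ι] {p q f g : ι → ℝ} {c d : ℝ}

lemma abs_sum_mul_le_of_abs_le (hp0 : ∀ i, 0 ≤ p i) (hp1 : ∑ i, p i = 1)
    (hf : ∀ i, |f i| ≤ c) : |∑ i, p i * f i| ≤ c :=
  calc |∑ i, p i * f i| ≤ ∑ i, p i * |f i| := by
        simpa only [abs_mul, abs_of_nonneg (hp0 _)] using
          abs_sum_le_sum_abs (fun i => p i * f i) univ
    _ ≤ ∑ i, p i * c := sum_le_sum fun i _ => mul_le_mul_of_nonneg_left (hf i) (hp0 i)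
    _ = c := by rw [← sum_mul, hp1, one_mul]

lemma abs_sum_mul_sub_sum_mul_le (hq0 : ∀ i, 0 ≤ q i) (hq1 : ∑ i, q i = 1)
    (hf : ∀ i, |f i| ≤ c) (hfg : ∀ i, |f i - g i| ≤ d) :
    |∑ i, p i * f i - ∑ i, q i * g i| ≤ (∑ i, |p i - q i|) * c + d := by
  have split : ∑ i, p i * f i - ∑ i, q i * g i
      = ∑ i, (p i - q i) * f i + ∑ i, q i * (f i - g i) := by
    simp only [sub_mul, mul_sub, sum_sub_distrib]
    ring
  have hchange : |∑ i, (p i - q i) * f i| ≤ (∑ i, |p i - q i|) * c :=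
    calc |∑ i, (p i - q i) * f i| ≤ ∑ i, |p i - q i| * |f i| := by
          simpa only [abs_mul] using abs_sum_le_sum_abs (fun i => (p i - q i) * f i) univ
      _ ≤ ∑ i, |p i - q i| * c :=
          sum_le_sum fun i _ => mul_le_mul_of_nonneg_left (hf i) (abs_nonneg _)
      _ = (∑ i, |p i - q i|) * c := (sum_mul ..).symm
  rw [split]
  exact (abs_add_le _ _).trans (add_le_add hchange (abs_sum_mul_le_of_abs_le hq0 hq1 hfg))

end WeightedSums

section Simulation

variable {S J : Type*} [Fintype S] [Fintype J] {H : ℕ} {P P' : ℕ → S → J → S → ℝ}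
  {R R' : ℕ → S → J → ℝ} {ρ : ℕ → S → J → ℝ}

lemma abs_gval_le (hP0 : ∀ h s a s', 0 ≤ P h s a s') (hP1 : ∀ h s a, ∑ s', P h s a s' = 1)
    (hR : ∀ h s a, |R h s a| ≤ 1) (hρ0 : ∀ h s a, 0 ≤ ρ h s a) (hρ1 : ∀ h s, ∑ a, ρ h s a = 1)
    (k : ℕ) (s : S) : |gval H P R ρ k s| ≤ k := by
  induction k generalizing s with
  | zero => simp [gval]
  | succ k ih =>
    refine abs_sum_mul_le_of_abs_le (hρ0 _ _) (hρ1 _ _) fun a => ?_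
    have hnext := abs_sum_mul_le_of_abs_le (hP0 (H - k) s a) (hP1 _ _ _) ih
    push_cast
    exact (abs_add_le _ _).trans (by linarith [hR (H - k) s a])

lemma abs_gval_sub_gval_le (hP0 : ∀ h s a s', 0 ≤ P h s a s')
    (hP1 : ∀ h s a, ∑ s', P h s a s' = 1) (hP'0 : ∀ h s a s', 0 ≤ P' h s a s')
    (hP'1 : ∀ h s a, ∑ s', P' h s a s' = 1) (hR : ∀ h s a, |R h s a| ≤ 1)
    (hρ0 : ∀ h s a, 0 ≤ ρ h s a) (hρ1 : ∀ h s, ∑ a, ρ h s a = 1) {dP dR : ℕ → ℝ}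
    (hdP : ∀ h s a, ∑ s', |P h s a s' - P' h s a s'| ≤ dP h)
    (hdR : ∀ h s a, |R h s a - R' h s a| ≤ dR h) {k : ℕ} (hk : k ≤ H) (s : S) :
    |gval H P R ρ k s - gval H P' R' ρ k s| ≤ ∑ h ∈ Icc (H - k + 1) H, (dR h + H * dP h) := by
  induction k generalizing s with
  | zero => simp [gval]
  | succ k ih =>
    have hsteps : Icc (H - (k + 1) + 1) H = insert (H - k) (Icc (H - k + 1) H) := by
      ext x; simp only [mem_Icc, mem_insert]; omega
    rw [hsteps, sum_insert (by simp), gval, gval, ← sum_sub_distrib]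
    simp only [← mul_sub]
    refine abs_sum_mul_le_of_abs_le (hρ0 _ _) (hρ1 _ _) fun a => ?_
    have htrans := abs_sum_mul_sub_sum_mul_le (p := P (H - k) s a) (hP'0 (H - k) s a)
      (hP'1 _ _ _) (fun s' => (abs_gval_le hP0 hP1 hR hρ0 hρ1 k s').trans
        (Nat.cast_le.mpr (Nat.le_of_succ_le hk))) (ih (Nat.le_of_succ_le hk))
    have hHdP : (∑ s', |P (H - k) s a s' - P' (H - k) s a s'|) * H ≤ H * dP (H - k) := by
      rw [mul_comm]
      exact mul_le_mul_of_nonneg_left (hdP _ _ _) (Nat.cast_nonneg H)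
    rw [add_sub_add_comm]
    exact (abs_add_le _ _).trans (by linarith [hdR (H - k) s a])

lemma gval_sub_gval_le_of_model_change (hP0 : ∀ h s a s', 0 ≤ P h s a s')
    (hP1 : ∀ h s a, ∑ s', P h s a s' = 1) (hP'0 : ∀ h s a s', 0 ≤ P' h s a s')
    (hP'1 : ∀ h s a, ∑ s', P' h s a s' = 1) (hR : ∀ h s a, |R h s a| ≤ 1)
    {ρ' : ℕ → S → J → ℝ} (hρ0 : ∀ h s a, 0 ≤ ρ h s a) (hρ1 : ∀ h s, ∑ a, ρ h s a = 1)
    (hρ'0 : ∀ h s a, 0 ≤ ρ' h s a) (hρ'1 : ∀ h s, ∑ a, ρ' h s a = 1) {dP dR : ℕ → ℝ}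
    (hdP : ∀ h s a, ∑ s', |P h s a s' - P' h s a s'| ≤ dP h)
    (hdR : ∀ h s a, |R h s a - R' h s a| ≤ dR h) (s : S) :
    gval H P' R' ρ' H s - gval H P' R' ρ H s
      ≤ gval H P R ρ' H s - gval H P R ρ H s + 2 * ∑ h ∈ Icc 1 H, (dR h + H * dP h) := by
  have hρ := abs_gval_sub_gval_le (H := H) hP0 hP1 hP'0 hP'1 hR hρ0 hρ1 hdP hdR le_rfl s
  have hρ' := abs_gval_sub_gval_le (H := H) hP0 hP1 hP'0 hP'1 hR hρ'0 hρ'1 hdP hdR le_rfl s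
  rw [Nat.sub_self, zero_add] at hρ hρ'
  linarith [abs_le.mp hρ, abs_le.mp hρ']

end Simulation

section Deviation

variable {m : ℕ} {S : Type*} {A : Fin m → Type*} [∀ i, Fintype (A i)]
  {π : ℕ → S → ((j : Fin m) → A j) → ℝ} {i : Fin m} {σ : ℕ → S → A i → ℝ}

lemma deviate_nonneg (hπ0 : ∀ h s a, 0 ≤ π h s a) (hσ0 : ∀ h s a, 0 ≤ σ h s a)
    (h : ℕ) (s : S) (a : (j : Fin m) → A j) : 0 ≤ deviate π i σ h s a :=
  mul_nonneg (hσ0 _ _ _) (sum_nonneg fun _ _ => hπ0 _ _ _)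

lemma sum_deviate (hπ1 : ∀ h s, ∑ a, π h s a = 1) (hσ1 : ∀ h s, ∑ a, σ h s a = 1)
    (h : ℕ) (s : S) : ∑ a, deviate π i σ h s a = 1 := by
  let swap : ((∀ j, A j) × A i) ≃ ((∀ j, A j) × A i) :=
    { toFun := fun p => (Function.update p.1 i p.2, p.1 i)
      invFun := fun p => (Function.update p.1 i p.2, p.1 i)
      left_inv := fun p => Prod.ext (by simp) (by simp)
      right_inv := fun p => Prod.ext (by simp) (by simp) }
  calc ∑ a, deviate π i σ h s a
      = ∑ p : (∀ j, A j) × A i, σ h s (p.1 i) * π h s (Function.update p.1 i p.2) := by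
        simp only [deviate, mul_sum, Fintype.sum_prod_type]
    _ = ∑ p : (∀ j, A j) × A i, σ h s p.2 * π h s p.1 :=
        Fintype.sum_equiv swap _ _ fun _ => rfl
    _ = 1 := by
        simp only [Fintype.sum_prod_type, ← sum_mul, hσ1, one_mul, hπ1]

end Deviation

/-- (Value content of Lemma B.2 / B.3 for Markov games: CCE gap under model change.) If the
joint Markov policy π is an ε-CCE of the Markov game M = (P, R), i.e. no player i can gain
more than ε by deviating to any Markov policy σ, then in any other game M' = (P', R') on the
same spaces, π is an (ε + 2H‖M − M'‖₁)-CCE, where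
‖M − M'‖₁ = Σ_{h=1}^H (max_{s,a} Σ_{s'} |P_h − P'_h| + max_{i,s,a} |R_{h,i} − R'_{h,i}|). -/
theorem stmt_1 (m : ℕ) (hm : 0 < m) {S : Type*} [Fintype S] [Nonempty S]
    (A : Fin m → Type*) [∀ i, Fintype (A i)] [∀ i, Nonempty (A i)]
    (H : ℕ) (s₁ : S)
    (P P' : ℕ → S → ((j : Fin m) → A j) → S → ℝ)
    (R R' : ℕ → Fin m → S → ((j : Fin m) → A j) → ℝ)
    (hP0 : ∀ h s a s', 0 ≤ P h s a s') (hP1 : ∀ h s a, ∑ s', P h s a s' = 1)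
    (hP'0 : ∀ h s a s', 0 ≤ P' h s a s') (hP'1 : ∀ h s a, ∑ s', P' h s a s' = 1)
    (hR : ∀ h i s a, R h i s a ∈ Set.Icc (0 : ℝ) 1)
    (π : ℕ → S → ((j : Fin m) → A j) → ℝ)
    (hπ0 : ∀ h s a, 0 ≤ π h s a) (hπ1 : ∀ h s, ∑ a, π h s a = 1)
    (ε : ℝ)
    (hCCE : ∀ i, ∀ σ : ℕ → S → A i → ℝ, (∀ h s a, 0 ≤ σ h s a) →
      (∀ h s, ∑ a, σ h s a = 1) →
      gval H P (fun h => R h i) (deviate π i σ) H s₁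
        - gval H P (fun h => R h i) π H s₁ ≤ ε) :
    ∀ i, ∀ σ : ℕ → S → A i → ℝ, (∀ h s a, 0 ≤ σ h s a) →
      (∀ h s, ∑ a, σ h s a = 1) →
      gval H P' (fun h => R' h i) (deviate π i σ) H s₁
        - gval H P' (fun h => R' h i) π H s₁
        ≤ ε + 2 * (H : ℝ) * ∑ h ∈ Finset.Icc 1 H,
          ((Finset.univ : Finset (S × ((j : Fin m) → A j))).sup' Finset.univ_nonempty
              (fun p => ∑ s', |P h p.1 p.2 s' - P' h p.1 p.2 s'|) +
            (Finset.univ : Finset (Fin m × S × ((j : Fin m) → A j))).sup'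
              (by have : Nonempty (Fin m) := ⟨⟨0, hm⟩⟩
                  exact Finset.univ_nonempty)
              (fun p => |R h p.1 p.2.1 p.2.2 - R' h p.1 p.2.1 p.2.2|)) := by
  intro i σ hσ0 hσ1
  set dP : ℕ → ℝ := fun h => (univ : Finset (S × ((j : Fin m) → A j))).sup' univ_nonempty
    (fun p => ∑ s', |P h p.1 p.2 s' - P' h p.1 p.2 s'|)
  set dR : ℕ → ℝ := fun h => (univ : Finset (Fin m × S × ((j : Fin m) → A j))).sup'
    (by have : Nonempty (Fin m) := ⟨⟨0, hm⟩⟩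
        exact univ_nonempty) (fun p => |R h p.1 p.2.1 p.2.2 - R' h p.1 p.2.1 p.2.2|)
  have hdP h s a : ∑ s', |P h s a s' - P' h s a s'| ≤ dP h := le_sup' (f := fun p : S × _ =>
    ∑ s', |P h p.1 p.2 s' - P' h p.1 p.2 s'|) (mem_univ (s, a))
  have hdR h s a : |R h i s a - R' h i s a| ≤ dR h := le_sup' (f := fun p : Fin m × S × _ =>
    |R h p.1 p.2.1 p.2.2 - R' h p.1 p.2.1 p.2.2|) (mem_univ (i, s, a))
  have hRi h s a : |R h i s a| ≤ 1 := abs_le.mpr ⟨by linarith [(hR h i s a).1], (hR h i s a).2⟩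
  have hsum_le : ∑ h ∈ Icc 1 H, (dR h + H * dP h) ≤ H * ∑ h ∈ Icc 1 H, (dP h + dR h) := by
    rw [mul_sum]
    refine sum_le_sum fun h hh => ?_
    have hH : (1 : ℝ) ≤ H := by exact_mod_cast (mem_Icc.mp hh).1.trans (mem_Icc.mp hh).2
    have hdR0 : 0 ≤ dR h :=
      (abs_nonneg _).trans (hdR h (Classical.arbitrary _) (Classical.arbitrary _))
    linarith [le_mul_of_one_le_left hdR0 hH]
  have hgain := gval_sub_gval_le_of_model_change (H := H) hP0 hP1 hP'0 hP'1 hRi hπ0 hπ1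
    (deviate_nonneg hπ0 hσ0) (sum_deviate hπ1 hσ1) hdP hdR s₁
  linarith [hCCE i σ hσ0 hσ1]
end

section
/- (Average-iterate Nash equilibrium for non-stationary two-player zero-sum matrix games, Appendix D.1.) Let A, B be positive integers, T a positive integer, R^1,…,R^T ∈ [0,1]^{A×B} payoff matrices, x^1,…,x^T probability vectors in Δ_A, y^1,…,y^T probability vectors in Δ_B, and ρ_x, ρ_y, Δ ≥ 0. Suppose (1/T)Σ_{t=1}^T (x^t)^⊤ R^t y^t − min_{y∈Δ_B} (1/T)Σ_{t=1}^T (x^t)^⊤ R^t y ≤ ρ_x, and max_{x∈Δ_A} (1/T)Σ_{t=1}^T x^⊤ R^t y^t − (1/T)Σ_{t=1}^T (x^t)^⊤ R^t y^t ≤ ρ_y, and Σ_{t=1}^{T−1} max_{a,b} |R^{t+1}_{ab} − R^t_{ab}| ≤ Δ. Then the averaged strategies x̄ = (1/T)Σ_t x^t, ȳ = (1/T)Σ_t y^t satisfy the duality-gap bound max_{x∈Δ_A} x^⊤ R^T ȳ − min_{y∈Δ_B} x̄^⊤ R^T y ≤ ρ_x + ρ_y + 2Δ. -/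
/-! Telescoping the variation bound puts every `R t` entrywise within `Δ` of `R T`, and against
mixed strategies an entrywise shift by `Δ` moves the payoff by at most `Δ`. By bilinearity, the
best response to `ȳ` in `R T` therefore earns at most the best fixed response against the `y t`
plus `Δ`, which the second regret bound controls by the average realized payoff plus `ρy`;
symmetrically, the best response to `x̄` concedes at least that average minus `ρx + Δ`. -/

open Finset

/-- Expected payoff to the max player in a two-player zero-sum matrix game with payoff
matrix `R`, when the max player plays the mixed strategy `x` and the min player plays `y`. -/
noncomputable def pay {A B : ℕ} (R : Fin A → Fin B → ℝ) (x : Fin A → ℝ) (y : Fin B → ℝ) : ℝ :=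
  ∑ a, ∑ b, x a * R a b * y b

section Payoff

variable {A B : ℕ}

lemma pay_mono {R R' : Fin A → Fin B → ℝ} {x : Fin A → ℝ} {y : Fin B → ℝ}
    (h : ∀ a b, R a b ≤ R' a b) (hx : 0 ≤ x) (hy : 0 ≤ y) : pay R x y ≤ pay R' x y := by
  unfold pay
  gcongr with a _ b _
  · exact hy b
  · exact hx a
  · exact h a b

lemma pay_add_const (R : Fin A → Fin B → ℝ) (d : ℝ) {x : Fin A → ℝ} {y : Fin B → ℝ}
    (hx : x ∈ stdSimplex ℝ (Fin A)) (hy : y ∈ stdSimplex ℝ (Fin B)) :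
    pay (fun a b => R a b + d) x y = pay R x y + d := by
  simp only [pay, mul_add, add_mul, sum_add_distrib, ← mul_sum, hy.2, mul_one, ← sum_mul, hx.2,
    one_mul]

lemma pay_le_pay_add_of_le {R R' : Fin A → Fin B → ℝ} {d : ℝ} {x : Fin A → ℝ} {y : Fin B → ℝ}
    (h : ∀ a b, R a b ≤ R' a b + d)
    (hx : x ∈ stdSimplex ℝ (Fin A)) (hy : y ∈ stdSimplex ℝ (Fin B)) :
    pay R x y ≤ pay R' x y + d :=
  (pay_mono h hx.1 hy.1).trans_eq (pay_add_const R' d hx hy)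

lemma pay_nonneg {R : Fin A → Fin B → ℝ} {x : Fin A → ℝ} {y : Fin B → ℝ}
    (hR : ∀ a b, 0 ≤ R a b) (hx : 0 ≤ x) (hy : 0 ≤ y) : 0 ≤ pay R x y := by
  simpa [pay] using pay_mono hR hx hy

lemma pay_le_one {R : Fin A → Fin B → ℝ} {x : Fin A → ℝ} {y : Fin B → ℝ}
    (hR : ∀ a b, R a b ≤ 1) (hx : x ∈ stdSimplex ℝ (Fin A)) (hy : y ∈ stdSimplex ℝ (Fin B)) :
    pay R x y ≤ 1 := by
  simpa [pay] using pay_le_pay_add_of_le (R' := 0) (by simpa using hR) hx hy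

lemma pay_mul_sum_right {ι : Type*} (R : Fin A → Fin B → ℝ) (x : Fin A → ℝ) (c : ℝ)
    (S : Finset ι) (y : ι → Fin B → ℝ) :
    pay R x (fun b => c * ∑ t ∈ S, y t b) = c * ∑ t ∈ S, pay R x (y t) := by
  simp only [pay, mul_sum]
  rw [sum_comm (s := S)]
  refine sum_congr rfl fun a _ => ?_
  rw [sum_comm (s := S)]
  exact sum_congr rfl fun b _ => sum_congr rfl fun t _ => by ring

lemma pay_mul_sum_left {ι : Type*} (R : Fin A → Fin B → ℝ) (y : Fin B → ℝ) (c : ℝ)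
    (S : Finset ι) (x : ι → Fin A → ℝ) :
    pay R (fun a => c * ∑ t ∈ S, x t a) y = c * ∑ t ∈ S, pay R (x t) y := by
  simp only [pay, mul_sum, sum_mul]
  rw [sum_comm (s := S)]
  refine sum_congr rfl fun a _ => ?_
  rw [sum_comm (s := S)]
  exact sum_congr rfl fun b _ => sum_congr rfl fun t _ => by ring

end Payoff

lemma abs_sub_le_sum_Icc_of_abs_sub_succ_le {f D : ℕ → ℝ} (hD : ∀ k, |f (k + 1) - f k| ≤ D k)
    {s T : ℕ} (hs : 1 ≤ s) (hsT : s ≤ T) : |f T - f s| ≤ ∑ k ∈ Icc 1 (T - 1), D k :=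
  calc |f T - f s| = dist (f s) (f T) := by rw [Real.dist_eq, abs_sub_comm]
    _ ≤ ∑ k ∈ Ico s T, dist (f k) (f (k + 1)) := dist_le_Ico_sum_dist f hsT
    _ ≤ ∑ k ∈ Ico s T, D k := by
      gcongr with k
      rw [dist_comm, Real.dist_eq]
      exact hD k
    _ ≤ ∑ k ∈ Icc 1 (T - 1), D k := by
      refine sum_le_sum_of_subset_of_nonneg (fun k hk => ?_) fun k _ _ =>
        (abs_nonneg _).trans (hD k)
      simp only [mem_Ico, mem_Icc] at hk ⊢
      omega

lemma avg_le_avg_add {T : ℕ} (hT : 0 < T) {f g : ℕ → ℝ} {d : ℝ}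
    (h : ∀ t ∈ Icc 1 T, f t ≤ g t + d) :
    1 / (T : ℝ) * ∑ t ∈ Icc 1 T, f t ≤ 1 / (T : ℝ) * ∑ t ∈ Icc 1 T, g t + d :=
  calc 1 / (T : ℝ) * ∑ t ∈ Icc 1 T, f t ≤ 1 / (T : ℝ) * ∑ t ∈ Icc 1 T, (g t + d) := by
        gcongr with t ht
        exact h t ht
    _ = 1 / (T : ℝ) * ∑ t ∈ Icc 1 T, g t + d := by
        rw [sum_add_distrib, sum_const, Nat.card_Icc, Nat.add_sub_cancel, nsmul_eq_mul]
        field_simp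

section Tracking

variable {A B T : ℕ} {R : ℕ → Fin A → Fin B → ℝ} {R' : Fin A → Fin B → ℝ} {d : ℝ}

lemma iSup_pay_avg_le [Nonempty (Fin A)] {y : ℕ → Fin B → ℝ} (hT : 0 < T)
    (hR : ∀ t ∈ Icc 1 T, ∀ a b, R t a b ≤ 1)
    (hy : ∀ t ∈ Icc 1 T, y t ∈ stdSimplex ℝ (Fin B))
    (hR' : ∀ t ∈ Icc 1 T, ∀ a b, R' a b ≤ R t a b + d) :
    ⨆ xx : stdSimplex ℝ (Fin A), pay R' xx (fun b => 1 / (T : ℝ) * ∑ t ∈ Icc 1 T, y t b)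
      ≤ (⨆ xx : stdSimplex ℝ (Fin A), 1 / (T : ℝ) * ∑ t ∈ Icc 1 T, pay (R t) xx (y t)) + d := by
  have hbdd : BddAbove (Set.range fun xx : stdSimplex ℝ (Fin A) =>
      1 / (T : ℝ) * ∑ t ∈ Icc 1 T, pay (R t) xx (y t)) := by
    refine ⟨1, Set.forall_mem_range.2 fun xx => ?_⟩
    simpa using avg_le_avg_add (g := 0) hT fun t ht => by
      rw [Pi.zero_apply, zero_add]
      exact pay_le_one (hR t ht) xx.2 (hy t ht)
  refine ciSup_le fun xx => ?_
  rw [pay_mul_sum_right]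
  refine (avg_le_avg_add hT fun t ht => pay_le_pay_add_of_le (hR' t ht) xx.2 (hy t ht)).trans ?_
  gcongr
  exact le_ciSup hbdd xx

lemma le_iInf_pay_avg [Nonempty (Fin B)] {x : ℕ → Fin A → ℝ} (hT : 0 < T)
    (hR : ∀ t ∈ Icc 1 T, ∀ a b, 0 ≤ R t a b)
    (hx : ∀ t ∈ Icc 1 T, x t ∈ stdSimplex ℝ (Fin A))
    (hR' : ∀ t ∈ Icc 1 T, ∀ a b, R t a b ≤ R' a b + d) :
    (⨅ yy : stdSimplex ℝ (Fin B), 1 / (T : ℝ) * ∑ t ∈ Icc 1 T, pay (R t) (x t) yy) - d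
      ≤ ⨅ yy : stdSimplex ℝ (Fin B), pay R' (fun a => 1 / (T : ℝ) * ∑ t ∈ Icc 1 T, x t a) yy := by
  have hbdd : BddBelow (Set.range fun yy : stdSimplex ℝ (Fin B) =>
      1 / (T : ℝ) * ∑ t ∈ Icc 1 T, pay (R t) (x t) yy) :=
    ⟨0, Set.forall_mem_range.2 fun yy => mul_nonneg (by positivity) <|
      sum_nonneg fun t ht => pay_nonneg (hR t ht) (hx t ht).1 yy.2.1⟩
  refine le_ciInf fun yy => ?_
  rw [pay_mul_sum_left, sub_le_iff_le_add]
  exact (ciInf_le hbdd yy).trans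
    (avg_le_avg_add hT fun t ht => pay_le_pay_add_of_le (hR' t ht) (hx t ht) yy.2)

end Tracking

/-- (Average-iterate Nash equilibrium for non-stationary two-player zero-sum matrix games,
Appendix D.1.) Given external-regret guarantees ρ_x, ρ_y for the two players' strategy
sequences against the non-stationary payoff matrices R^1,…,R^T with total variation at most Δ,
the averaged strategies (x̄, ȳ) have duality gap at most ρ_x + ρ_y + 2Δ in the final game R^T. -/
theorem stmt_5 (A B T : ℕ) (hA : 0 < A) (hB : 0 < B) (hT : 0 < T)
    (R : ℕ → Fin A → Fin B → ℝ)
    (hR : ∀ t ∈ Finset.Icc 1 T, ∀ a b, R t a b ∈ Set.Icc (0 : ℝ) 1)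
    (x : ℕ → Fin A → ℝ) (hx : ∀ t ∈ Finset.Icc 1 T, x t ∈ stdSimplex ℝ (Fin A))
    (y : ℕ → Fin B → ℝ) (hy : ∀ t ∈ Finset.Icc 1 T, y t ∈ stdSimplex ℝ (Fin B))
    (ρx ρy Δ : ℝ)
    (hregx : (1 / (T : ℝ)) * ∑ t ∈ Finset.Icc 1 T, pay (R t) (x t) (y t)
        - (⨅ yy : stdSimplex ℝ (Fin B),
            (1 / (T : ℝ)) * ∑ t ∈ Finset.Icc 1 T, pay (R t) (x t) yy) ≤ ρx)
    (hregy : (⨆ xx : stdSimplex ℝ (Fin A),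
          (1 / (T : ℝ)) * ∑ t ∈ Finset.Icc 1 T, pay (R t) xx (y t))
        - (1 / (T : ℝ)) * ∑ t ∈ Finset.Icc 1 T, pay (R t) (x t) (y t) ≤ ρy)
    (hvar : ∑ t ∈ Finset.Icc 1 (T - 1),
        (Finset.univ : Finset (Fin A × Fin B)).sup'
          (by have : Nonempty (Fin A × Fin B) := ⟨(⟨0, hA⟩, ⟨0, hB⟩)⟩
              exact Finset.univ_nonempty)
          (fun p => |R (t + 1) p.1 p.2 - R t p.1 p.2|) ≤ Δ) :
    (⨆ xx : stdSimplex ℝ (Fin A),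
        pay (R T) xx (fun b => (1 / (T : ℝ)) * ∑ t ∈ Finset.Icc 1 T, y t b))
      - (⨅ yy : stdSimplex ℝ (Fin B),
          pay (R T) (fun a => (1 / (T : ℝ)) * ∑ t ∈ Finset.Icc 1 T, x t a) yy)
      ≤ ρx + ρy + 2 * Δ := by
  have : Nonempty (Fin A) := Fin.pos_iff_nonempty.mp hA
  have : Nonempty (Fin B) := Fin.pos_iff_nonempty.mp hB
  have hdrift : ∀ t ∈ Icc 1 T, ∀ a b, |R T a b - R t a b| ≤ Δ := fun t ht a b =>
    (abs_sub_le_sum_Icc_of_abs_sub_succ_le (f := fun k => R k a b)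
      (fun k => le_sup' (fun p : Fin A × Fin B => |R (k + 1) p.1 p.2 - R k p.1 p.2|)
        (mem_univ (a, b))) (mem_Icc.1 ht).1 (mem_Icc.1 ht).2).trans hvar
  have hsup := iSup_pay_avg_le (R' := R T) (d := Δ) hT (fun t ht a b => (hR t ht a b).2) hy
    fun t ht a b => by linarith [(abs_le.1 (hdrift t ht a b)).2]
  have hinf := le_iInf_pay_avg (R' := R T) (d := Δ) hT (fun t ht a b => (hR t ht a b).1) hx
    fun t ht a b => by linarith [(abs_le.1 (hdrift t ht a b)).1]
  linarith
end

section
/- (Average-iterate CCE for non-stationary multi-player general-sum matrix games, Appendix D.2.) Let m, T be positive integers, A_1,…,A_m finite nonempty action sets, and for each t ∈ {1,…,T} and player i let r_i^t : A_1 × ⋯ × A_m → [0,1] be reward functions. Let π^t = π_1^t ⊗ ⋯ ⊗ π_m^t be product distributions with π_i^t ∈ Δ(A_i), and Δ, ρ_1,…,ρ_m ≥ 0. Suppose Σ_{t=1}^{T−1} max_{i} max_{a} |r_i^{t+1}(a) − r_i^t(a)| ≤ Δ, and for each player i, max_{a'_i ∈ A_i} (1/T) Σ_{t=1}^T E_{a_{-i}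 ∼ π^t_{-i}}[ r_i^t(a'_i, a_{-i}) ] − (1/T) Σ_{t=1}^T E_{a ∼ π^t}[ r_i^t(a) ] ≤ ρ_i. Then the averaged joint distribution π̄ = (1/T) Σ_{t=1}^T π^t satisfies, for every player i, max_{a'_i ∈ A_i} E_{a ∼ π̄}[ r_i^T(a'_i, a_{-i}) ] − E_{a ∼ π̄}[ r_i^T(a) ] ≤ ρ_i + 2Δ. -/
/-!
Fix a player `i` and compare the game `r^T` with the games `r^t` actually played. By
telescoping, `|r^T - r^t| ≤ Δ` pointwise for every `t ≤ T`, so for any deviation map `b` of joint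
actions the expected reward of `r^T ∘ b` under `π̄` differs by at most `Δ` from the time average of
the expected rewards of `r^t ∘ b` under `π^t`. Applying this to the deviations
`a ↦ update a i a'` and to the identity converts the regret bound `ρ i` into a CCE gap bound,
losing `Δ` on each of the two terms.
-/

open Finset

lemma abs_sub_le_sum_sup'_abs_sub {α : Type*} [Fintype α] (hα : (univ : Finset α).Nonempty)
    (g : ℕ → α → ℝ) {s T : ℕ} (hs : 1 ≤ s) (hsT : s ≤ T) (x : α) :
    |g T x - g s x| ≤
      ∑ t ∈ Icc 1 (T - 1), univ.sup' hα fun y => |g (t + 1) y - g t y| := by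
  have hsub : Ico s T ⊆ Icc 1 (T - 1) := fun t ht => by
    rw [mem_Ico] at ht
    rw [mem_Icc]
    omega
  calc |g T x - g s x| = dist (g s x) (g T x) := by rw [Real.dist_eq, abs_sub_comm]
    _ ≤ ∑ t ∈ Ico s T, dist (g t x) (g (t + 1) x) := dist_le_Ico_sum_dist (g · x) hsT
    _ = ∑ t ∈ Ico s T, |g (t + 1) x - g t x| := by simp only [Real.dist_eq, abs_sub_comm]
    _ ≤ ∑ t ∈ Icc 1 (T - 1), |g (t + 1) x - g t x| :=
      sum_le_sum_of_subset_of_nonneg hsub fun _ _ _ => abs_nonneg _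
    _ ≤ _ := sum_le_sum fun t _ => le_sup' (fun y => |g (t + 1) y - g t y|) (mem_univ x)

lemma sum_prod_eq_one {ι : Type*} [Fintype ι] [DecidableEq ι] {A : ι → Type*}
    [∀ i, Fintype (A i)] {π : (i : ι) → A i → ℝ} (hπ : ∀ i, ∑ a, π i a = 1) :
    ∑ a : (j : ι) → A j, ∏ j, π j (a j) = 1 := by
  rw [← Fintype.prod_sum, Finset.prod_eq_one fun i _ => hπ i]

section Averaging

variable {κ ι : Type*} [Fintype ι]

lemma abs_sum_mul_sub_sum_mul_le_s6 {p f g : ι → ℝ} {ε : ℝ} (hp0 : ∀ a, 0 ≤ p a)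
    (hp1 : ∑ a, p a = 1) (hfg : ∀ a, |f a - g a| ≤ ε) :
    |∑ a, p a * f a - ∑ a, p a * g a| ≤ ε := by
  rw [← sum_sub_distrib]
  calc |∑ a, (p a * f a - p a * g a)| ≤ ∑ a, |p a * f a - p a * g a| := abs_sum_le_sum_abs _ _
    _ ≤ ∑ a, p a * ε := sum_le_sum fun a _ => by
        rw [← mul_sub, abs_mul, abs_of_nonneg (hp0 a)]
        exact mul_le_mul_of_nonneg_left (hfg a) (hp0 a)
    _ = ε := by rw [← sum_mul, hp1, one_mul]

lemma abs_average_le {s : Finset κ} (hs : s.Nonempty) {z : κ → ℝ} {ε : ℝ}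
    (hz : ∀ t ∈ s, |z t| ≤ ε) : |(1 / (#s : ℝ)) * ∑ t ∈ s, z t| ≤ ε := by
  have hcard : (0 : ℝ) < #s := by exact_mod_cast hs.card_pos
  calc |(1 / (#s : ℝ)) * ∑ t ∈ s, z t| ≤ (1 / (#s : ℝ)) * ∑ t ∈ s, |z t| := by
        rw [abs_mul, abs_of_pos (by positivity)]
        gcongr
        exact abs_sum_le_sum_abs _ _
    _ ≤ (1 / (#s : ℝ)) * (#s * ε) := by
        gcongr
        simpa only [nsmul_eq_mul] using sum_le_card_nsmul s _ ε hz
    _ = ε := by field_simp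

lemma sum_average_mul (s : Finset κ) (c : ℝ) (P : κ → ι → ℝ) (R : ι → ℝ) :
    ∑ a, (c * ∑ t ∈ s, P t a) * R a = c * ∑ t ∈ s, ∑ a, P t a * R a := by
  simp only [mul_sum, sum_mul, mul_assoc]
  exact sum_comm

lemma abs_mixture_expectation_sub_le {s : Finset κ} (hs : s.Nonempty) {P : κ → ι → ℝ}
    (hP0 : ∀ t ∈ s, ∀ a, 0 ≤ P t a) (hP1 : ∀ t ∈ s, ∑ a, P t a = 1)
    {f : ι → ℝ} {g : κ → ι → ℝ} {ε : ℝ} (hfg : ∀ t ∈ s, ∀ a, |f a - g t a| ≤ ε) :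
    |∑ a, ((1 / (#s : ℝ)) * ∑ t ∈ s, P t a) * f a
      - (1 / (#s : ℝ)) * ∑ t ∈ s, ∑ a, P t a * g t a| ≤ ε := by
  rw [sum_average_mul, ← mul_sub, ← sum_sub_distrib]
  exact abs_average_le hs fun t ht => abs_sum_mul_sub_sum_mul_le_s6 (hP0 t ht) (hP1 t ht) (hfg t ht)

end Averaging

lemma sup'_le_sup'_add_of_le {β : Type*} {s : Finset β} (hs : s.Nonempty) {f g : β → ℝ} {c : ℝ}
    (h : ∀ b ∈ s, f b ≤ g b + c) : s.sup' hs f ≤ s.sup' hs g + c := by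
  rw [sup'_add]
  exact sup'_mono_fun h

/-- (Average-iterate CCE for non-stationary multi-player general-sum matrix games,
Appendix D.2.) If each player i runs a no-external-regret algorithm producing product
distributions π^t = ⊗_i π_i^t for the non-stationary rewards r^t with total variation at
most Δ, then the averaged joint distribution π̄ = (1/T)Σ_t π^t has CCE gap at most
ρ_i + 2Δ for each player i in the final game r^T. -/
theorem stmt_6 (m T : ℕ) (hm : 0 < m) (hT : 0 < T)
    (A : Fin m → Type*) [∀ i, Fintype (A i)] [∀ i, Nonempty (A i)] [∀ i, DecidableEq (A i)]
    (r : ℕ → (i : Fin m) → ((j : Fin m) → A j) → ℝ)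
    (π : ℕ → (i : Fin m) → A i → ℝ)
    (hπ0 : ∀ t ∈ Finset.Icc 1 T, ∀ i a, 0 ≤ π t i a)
    (hπ1 : ∀ t ∈ Finset.Icc 1 T, ∀ i, ∑ a, π t i a = 1)
    (Δ : ℝ) (ρ : Fin m → ℝ)
    (hvar : ∑ t ∈ Finset.Icc 1 (T - 1),
        (Finset.univ : Finset (Fin m × ((j : Fin m) → A j))).sup'
          (by have : Nonempty (Fin m) := ⟨⟨0, hm⟩⟩
              exact Finset.univ_nonempty)
          (fun p => |r (t + 1) p.1 p.2 - r t p.1 p.2|) ≤ Δ)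
    (hreg : ∀ i,
        (Finset.univ : Finset (A i)).sup' Finset.univ_nonempty (fun a' =>
          (1 / (T : ℝ)) * ∑ t ∈ Finset.Icc 1 T, ∑ a : (j : Fin m) → A j,
            (∏ j, π t j (a j)) * r t i (Function.update a i a'))
        - (1 / (T : ℝ)) * ∑ t ∈ Finset.Icc 1 T, ∑ a : (j : Fin m) → A j,
            (∏ j, π t j (a j)) * r t i a ≤ ρ i) :
    ∀ i,
      (Finset.univ : Finset (A i)).sup' Finset.univ_nonempty (fun a' =>
        ∑ a : (j : Fin m) → A j,
          ((1 / (T : ℝ)) * ∑ t ∈ Finset.Icc 1 T, ∏ j, π t j (a j))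
            * r T i (Function.update a i a'))
      - ∑ a : (j : Fin m) → A j,
          ((1 / (T : ℝ)) * ∑ t ∈ Finset.Icc 1 T, ∏ j, π t j (a j)) * r T i a
      ≤ ρ i + 2 * Δ := by
  intro i
  have : Nonempty (Fin m) := ⟨⟨0, hm⟩⟩
  have hdrift : ∀ t ∈ Icc 1 T, ∀ a, |r T i a - r t i a| ≤ Δ := fun t ht a =>
    (abs_sub_le_sum_sup'_abs_sub univ_nonempty (fun t (p : Fin m × ((j : Fin m) → A j)) =>
      r t p.1 p.2) (mem_Icc.mp ht).1 (mem_Icc.mp ht).2 (i, a)).trans hvar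
  have hmixture := fun b : ((j : Fin m) → A j) → (j : Fin m) → A j =>
    abs_mixture_expectation_sub_le (nonempty_Icc.mpr hT)
      (fun t ht a => prod_nonneg fun j _ => hπ0 t ht j (a j))
      (fun t ht => sum_prod_eq_one (hπ1 t ht)) (f := fun a => r T i (b a))
      (g := fun t a => r t i (b a)) fun t ht a => hdrift t ht (b a)
  simp only [Nat.card_Icc, add_tsub_cancel_right] at hmixture
  have hdeviate := sup'_le_sup'_add_of_le univ_nonempty fun a' (_ : a' ∈ univ) =>
    le_add_of_sub_left_le (abs_le.mp (hmixture fun a => Function.update a i a')).2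
  have hstay := (abs_le.mp (hmixture id)).1
  simp only [id] at hstay
  linarith [hreg i]
end

section
/- (Lemma C.4, number of near-stationary intervals.) Let n be a nonnegative integer, c > 0, Δ ≥ 0, and l ≥ 2 an integer. Suppose a_1, …, a_{l−1} are positive reals with Σ_{k=1}^{l−1} a_k ≤ 2^n and Σ_{k=1}^{l−1} max{ 1/(2√(a_k)), 2^{−n/4−1} } ≤ c·Δ. Then l ≤ 1 + 2·min{ 2^{n/3}·(c·Δ)^{2/3}, 2^{n/4}·c·Δ }. -/
/-!
Write `m = l - 1` and `t = 2^(-n/4-1)`. Keeping only the constant term of each maximum gives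
`m t ≤ cΔ`, i.e. `m ≤ 2 · 2^(n/4) cΔ`. Keeping only the other term gives `∑ 1/√a_k ≤ 2cΔ`, and two
applications of Cauchy–Schwarz, `m² ≤ (∑ √a_k)(∑ 1/√a_k)` and `(∑ √a_k)² ≤ m ∑ a_k`, yield
`m³ ≤ (∑ a_k)(∑ 1/√a_k)² ≤ 4 · 2^n (cΔ)²`, i.e. `m ≤ 2 · 2^(n/3) (cΔ)^(2/3)` after a cube root.
-/

open Finset

theorem card_pow_three_le_sum_mul_sq_sum_inv_sqrt {ι : Type*} (s : Finset ι) {a : ι → ℝ}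
    (ha : ∀ i ∈ s, 0 < a i) :
    (#s : ℝ) ^ 3 ≤ (∑ i ∈ s, a i) * (∑ i ∈ s, (√(a i))⁻¹) ^ 2 := by
  have hsqrt : ∀ i ∈ s, 0 < √(a i) := fun i hi => Real.sqrt_pos.mpr (ha i hi)
  have harm : (#s : ℝ) ^ 2 ≤ (∑ i ∈ s, √(a i)) * ∑ i ∈ s, (√(a i))⁻¹ := by
    simpa using sum_sq_le_sum_mul_sum_of_sq_le_mul s (r := fun _ => (1 : ℝ))
      (fun i hi => (hsqrt i hi).le) (fun i hi => (inv_pos.mpr (hsqrt i hi)).le)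
      fun i hi => by rw [one_pow, mul_inv_cancel₀ (hsqrt i hi).ne']
  have hqm : (∑ i ∈ s, √(a i)) ^ 2 ≤ #s * ∑ i ∈ s, a i := by
    have := sq_sum_le_card_mul_sum_sq (s := s) (f := fun i => √(a i))
    rwa [sum_congr rfl fun i hi => Real.sq_sqrt (ha i hi).le] at this
  have hfour : (#s : ℝ) * (#s : ℝ) ^ 3 ≤ #s * ((∑ i ∈ s, a i) * (∑ i ∈ s, (√(a i))⁻¹) ^ 2) :=
    calc (#s : ℝ) * (#s : ℝ) ^ 3 = ((#s : ℝ) ^ 2) ^ 2 := by ring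
      _ ≤ ((∑ i ∈ s, √(a i)) * ∑ i ∈ s, (√(a i))⁻¹) ^ 2 := by gcongr
      _ = (∑ i ∈ s, √(a i)) ^ 2 * (∑ i ∈ s, (√(a i))⁻¹) ^ 2 := mul_pow ..
      _ ≤ (#s * ∑ i ∈ s, a i) * (∑ i ∈ s, (√(a i))⁻¹) ^ 2 := by gcongr
      _ = _ := mul_assoc ..
  rcases s.eq_empty_or_nonempty with rfl | hs
  · simp
  · exact le_of_mul_le_mul_left hfour (by simpa using hs)

theorem le_two_mul_rpow_of_pow_three_le {m x y : ℝ} (hx : 0 ≤ x) (hy : 0 ≤ y)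
    (h : m ^ 3 ≤ 8 * x * y ^ 2) : m ≤ 2 * (x ^ (1 / 3 : ℝ) * y ^ (2 / 3 : ℝ)) := by
  refine le_of_pow_le_pow_left₀ three_ne_zero (by positivity) (h.trans_eq ?_)
  rw [mul_pow, mul_pow, ← Real.rpow_natCast (x ^ _), ← Real.rpow_natCast (y ^ _),
    ← Real.rpow_mul hx, ← Real.rpow_mul hy]
  norm_num
  ring

theorem le_two_mul_rpow_mul_of_mul_rpow_le {m C r : ℝ} (h : m * 2 ^ (-r - 1) ≤ C) :
    m ≤ 2 * (2 ^ r * C) := by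
  have h2r : (0 : ℝ) < 2 ^ r := by positivity
  rw [Real.rpow_sub two_pos, Real.rpow_neg zero_le_two, Real.rpow_one, ← mul_div_assoc,
    ← div_eq_mul_inv, div_div, div_le_iff₀ (by positivity)] at h
  linarith

theorem stmt_9_general (n : ℕ) (c Δ : ℝ) (l : ℕ)
    (a : Fin (l - 1) → ℝ) (ha : ∀ k, 0 < a k)
    (hsum : ∑ k, a k ≤ (2 : ℝ) ^ (n : ℝ))
    (hvar : ∑ k, max (1 / (2 * Real.sqrt (a k))) ((2 : ℝ) ^ (-(n : ℝ) / 4 - 1)) ≤ c * Δ) :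
    (l : ℝ) ≤ 1 + 2 * min ((2 : ℝ) ^ ((n : ℝ) / 3) * (c * Δ) ^ ((2 : ℝ) / 3))
      ((2 : ℝ) ^ ((n : ℝ) / 4) * (c * Δ)) := by
  have hl : (l : ℝ) ≤ ((l - 1 : ℕ) : ℝ) + 1 := by exact_mod_cast (by omega : l ≤ l - 1 + 1)
  set m : ℝ := ((l - 1 : ℕ) : ℝ)
  have hfloor : m * 2 ^ (-(n : ℝ) / 4 - 1) ≤ c * Δ :=
    calc m * 2 ^ (-(n : ℝ) / 4 - 1) = ∑ _k : Fin (l - 1), (2 : ℝ) ^ (-(n : ℝ) / 4 - 1) := by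
          simp [m]
      _ ≤ c * Δ := (sum_le_sum fun k _ => le_max_right _ _).trans hvar
  have hinv : ∑ k, (√(a k))⁻¹ ≤ 2 * (c * Δ) :=
    calc ∑ k, (√(a k))⁻¹ = 2 * ∑ k, 1 / (2 * √(a k)) := by
          rw [mul_sum]; congr! 1 with k; field_simp
      _ ≤ 2 * (c * Δ) := by
          gcongr
          exact (sum_le_sum fun k _ => le_max_left _ _).trans hvar
  have hcΔ : 0 ≤ c * Δ := (by positivity : 0 ≤ m * 2 ^ (-(n : ℝ) / 4 - 1)).trans hfloor
  have hpow : m ≤ 2 * (2 ^ ((n : ℝ) / 3) * (c * Δ) ^ (2 / 3 : ℝ)) := by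
    rw [div_eq_mul_one_div (n : ℝ), Real.rpow_mul zero_le_two]
    refine le_two_mul_rpow_of_pow_three_le (by positivity) hcΔ ?_
    calc m ^ 3 ≤ (∑ k, a k) * (∑ k, (√(a k))⁻¹) ^ 2 := by
          simpa [m] using card_pow_three_le_sum_mul_sq_sum_inv_sqrt univ fun k _ => ha k
      _ ≤ 2 ^ (n : ℝ) * (2 * (c * Δ)) ^ 2 := by gcongr
      _ ≤ 8 * 2 ^ (n : ℝ) * (c * Δ) ^ 2 := by
          nlinarith [mul_nonneg (by positivity : (0 : ℝ) ≤ 2 ^ (n : ℝ)) (sq_nonneg (c * Δ))]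
  have hlin : m ≤ 2 * (2 ^ ((n : ℝ) / 4) * (c * Δ)) :=
    le_two_mul_rpow_mul_of_mul_rpow_le (by rwa [neg_div] at hfloor)
  have hmin := le_min hpow hlin
  rw [← mul_min_of_nonneg _ _ zero_le_two] at hmin
  linarith

/-- (Lemma C.4, number of near-stationary intervals.) If positive reals a_1,…,a_{l-1}
(the interval lengths) satisfy Σ a_k ≤ 2^n and Σ max{1/(2√a_k), 2^{-n/4-1}} ≤ c·Δ, then
l ≤ 1 + 2·min{2^{n/3}(cΔ)^{2/3}, 2^{n/4} cΔ}. -/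
theorem stmt_9 (n : ℕ) (c Δ : ℝ) (hc : 0 < c) (hΔ : 0 ≤ Δ) (l : ℕ) (hl : 2 ≤ l)
    (a : Fin (l - 1) → ℝ) (ha : ∀ k, 0 < a k)
    (hsum : ∑ k, a k ≤ (2 : ℝ) ^ (n : ℝ))
    (hvar : ∑ k, max (1 / (2 * Real.sqrt (a k))) ((2 : ℝ) ^ (-(n : ℝ) / 4 - 1)) ≤ c * Δ) :
    (l : ℝ) ≤ 1 + 2 * min ((2 : ℝ) ^ ((n : ℝ) / 3) * (c * Δ) ^ ((2 : ℝ) / 3))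
      ((2 : ℝ) ^ ((n : ℝ) / 4) * (c * Δ)) :=
  stmt_9_general n c Δ l a ha hsum hvar
end

section
/- (Bound on number of restart segments in Theorem 5.4.) Let J be a positive integer, c > 0, and let b_1, …, b_J be positive reals and d_1, …, d_J nonnegative reals such that for every j, c·d_j ≥ (√2 − 1)·b_j^{−1/4}. If Σ_{j=1}^J b_j ≤ T and Σ_{j=1}^J d_j ≤ Δ, then J ≤ (√2 − 1)^{−4/5} · (c·Δ)^{4/5} · T^{1/5}. -/
/-!
Raising `c d_j / (√2 - 1) ≥ b_j^{-1/4}` to the power `4/5` gives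
`1 ≤ (c d_j / (√2 - 1))^{4/5} b_j^{1/5}` for every segment. Summing over the `J` segments and
applying Hölder's inequality with exponents `5/4` and `5` bounds `J` by
`(∑ c d_j / (√2 - 1))^{4/5} (∑ b_j)^{1/5} ≤ (c Δ / (√2 - 1))^{4/5} T^{1/5}`.
-/

open Finset Real

theorem one_le_rpow_mul_rpow_of_rpow_neg_le {x u s θ η : ℝ} (hx : 0 < x) (hθ : 0 ≤ θ)
    (hsθ : s * θ = η) (h : x ^ (-s) ≤ u) : 1 ≤ u ^ θ * x ^ η := by
  have hpow : x ^ (-η) ≤ u ^ θ := by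
    calc x ^ (-η) = (x ^ (-s)) ^ θ := by rw [← rpow_mul hx.le, neg_mul, hsθ]
      _ ≤ u ^ θ := rpow_le_rpow (rpow_nonneg hx.le _) h hθ
  calc (1 : ℝ) = x ^ (-η) * x ^ η := by rw [← rpow_add hx]; simp
    _ ≤ u ^ θ * x ^ η := mul_le_mul_of_nonneg_right hpow (rpow_nonneg hx.le _)

theorem sum_rpow_mul_rpow_le {ι : Type*} (s : Finset ι) {f g : ι → ℝ} {θ η : ℝ} (hθ : 0 < θ)
    (hη : 0 < η) (hθη : θ + η = 1) (hf : ∀ i ∈ s, 0 ≤ f i) (hg : ∀ i ∈ s, 0 ≤ g i) :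
    ∑ i ∈ s, f i ^ θ * g i ^ η ≤ (∑ i ∈ s, f i) ^ θ * (∑ i ∈ s, g i) ^ η := by
  have hHolder := inner_le_Lp_mul_Lq_of_nonneg s (HolderConjugate.inv_inv hθ hη hθη)
    (fun i hi => rpow_nonneg (hf i hi) θ) (fun i hi => rpow_nonneg (hg i hi) η)
  refine hHolder.trans_eq ?_
  have hf_pow : ∀ i ∈ s, (f i ^ θ) ^ θ⁻¹ = f i := fun i hi =>
    rpow_rpow_inv (hf i hi) hθ.ne'
  have hg_pow : ∀ i ∈ s, (g i ^ η) ^ η⁻¹ = g i := fun i hi =>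
    rpow_rpow_inv (hg i hi) hη.ne'
  rw [sum_congr rfl hf_pow, sum_congr rfl hg_pow, one_div, one_div, inv_inv, inv_inv]

theorem card_le_sum_rpow_mul_sum_rpow {ι : Type*} (s : Finset ι) {f g : ι → ℝ} {θ η : ℝ}
    (hθ : 0 < θ) (hη : 0 < η) (hθη : θ + η = 1) (hf : ∀ i ∈ s, 0 ≤ f i)
    (hg : ∀ i ∈ s, 0 ≤ g i) (h : ∀ i ∈ s, 1 ≤ f i ^ θ * g i ^ η) :
    (#s : ℝ) ≤ (∑ i ∈ s, f i) ^ θ * (∑ i ∈ s, g i) ^ η :=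
  calc (#s : ℝ) = ∑ _i ∈ s, (1 : ℝ) := by simp
    _ ≤ ∑ i ∈ s, f i ^ θ * g i ^ η := sum_le_sum h
    _ ≤ _ := sum_rpow_mul_rpow_le s hθ hη hθη hf hg

theorem stmt_11_general (J : ℕ) (c : ℝ) (hc : 0 < c) (T Δ : ℝ)
    (b d : Fin J → ℝ) (hb : ∀ j, 0 < b j)
    (hgap : ∀ j, (Real.sqrt 2 - 1) * (b j) ^ (-(1 : ℝ) / 4) ≤ c * d j)
    (hbT : ∑ j, b j ≤ T) (hdΔ : ∑ j, d j ≤ Δ) :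
    (J : ℝ) ≤ (Real.sqrt 2 - 1) ^ (-(4 : ℝ) / 5) * (c * Δ) ^ ((4 : ℝ) / 5) * T ^ ((1 : ℝ) / 5) := by
  set κ := √2 - 1
  have hκ : 0 < κ := sub_pos.2 one_lt_sqrt_two
  set u : Fin J → ℝ := fun j => c * d j / κ
  have hbu : ∀ j, b j ^ (-((1 : ℝ) / 4)) ≤ u j := fun j => by
    rw [le_div_iff₀ hκ, mul_comm, ← neg_div]; exact hgap j
  have hu : ∀ j, 0 ≤ u j := fun j => (rpow_nonneg (hb j).le _).trans (hbu j)
  have hcount := card_le_sum_rpow_mul_sum_rpow univ (θ := 4 / 5) (η := 1 / 5)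
    (by norm_num) (by norm_num) (by norm_num) (fun j _ => hu j) (fun j _ => (hb j).le)
    (fun j _ => one_le_rpow_mul_rpow_of_rpow_neg_le (hb j) (by norm_num) (by norm_num) (hbu j))
  have hsum_u : ∑ j, u j ≤ c * Δ / κ := by
    rw [← sum_div, ← mul_sum]
    gcongr
  have hcΔ : 0 ≤ c * Δ := by
    simpa using (le_div_iff₀ hκ).1 ((sum_nonneg fun j _ => hu j).trans hsum_u)
  calc (J : ℝ) ≤ (∑ j, u j) ^ ((4 : ℝ) / 5) * (∑ j, b j) ^ ((1 : ℝ) / 5) := by simpa using hcount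
    _ ≤ (c * Δ / κ) ^ ((4 : ℝ) / 5) * T ^ ((1 : ℝ) / 5) := by
      have hb_sum : 0 ≤ ∑ j, b j := sum_nonneg fun j _ => (hb j).le
      have hu_sum : 0 ≤ ∑ j, u j := sum_nonneg fun j _ => hu j
      gcongr
    _ = κ ^ (-(4 : ℝ) / 5) * (c * Δ) ^ ((4 : ℝ) / 5) * T ^ ((1 : ℝ) / 5) := by
      rw [div_rpow hcΔ hκ.le, div_eq_mul_inv, ← rpow_neg hκ.le, neg_div, mul_comm ((c * Δ) ^ _)]

/-- (Bound on the number of restart segments in Theorem 5.4.) If each segment of length b_j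
and nonstationarity d_j satisfies c·d_j ≥ (√2 − 1)·b_j^{-1/4}, Σ b_j ≤ T and Σ d_j ≤ Δ, then
J ≤ (√2 − 1)^{-4/5}·(cΔ)^{4/5}·T^{1/5}. -/
theorem stmt_11 (J : ℕ) (hJ : 0 < J) (c : ℝ) (hc : 0 < c) (T Δ : ℝ)
    (b d : Fin J → ℝ) (hb : ∀ j, 0 < b j) (hd : ∀ j, 0 ≤ d j)
    (hgap : ∀ j, (Real.sqrt 2 - 1) * (b j) ^ (-(1 : ℝ) / 4) ≤ c * d j)
    (hbT : ∑ j, b j ≤ T) (hdΔ : ∑ j, d j ≤ Δ) :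
    (J : ℝ) ≤ (Real.sqrt 2 - 1) ^ (-(4 : ℝ) / 5) * (c * Δ) ^ ((4 : ℝ) / 5) * T ^ ((1 : ℝ) / 5) :=
  stmt_11_general J c hc T Δ b d hb hgap hbT hdΔ
end

section
/- (Deterministic aggregation step of Theorem 5.4, α = −2 case, total-variation budget.) Let T be a positive real, J a positive integer, and b_1, …, b_J positive reals with Σ_{j=1}^J b_j = T, and d_1, …, d_J nonnegative reals with Σ_{j=1}^J d_j ≤ D. Let C, C', c₁, c₂ ≥ 0, D' ≥ 0, and suppose J ≤ C'·T^{1/5}·D'^{4/5} and nonnegative reals R_1, …, R_J satisfy R_j ≤ C·( b_j^{3/4} + c₂·min{ b_j^{2/3}·d_j^{1/3}, b_j^{5/8}·d_j^{1/2} } + (c₁ + c₂^{3/2})·b_j^{1/2} ) for every j. Then Σ_{j=1}^J R_j ≤ C·( (C')^{1/4}·D'^{1/5}·T^{4/5} + c₂·min{ D^{1/3}·T^{2/3}, D^{1/2}·T^{5/8} } + (c₁ + c₂^{3/2})·(C')^{1/2}·D'^{2/5}·T^{3/5} ). -/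
open Finset in
lemma holder_aux {J : ℕ} (x y : Fin J → ℝ) (hx : ∀ j, 0 ≤ x j) (hy : ∀ j, 0 ≤ y j)
    {a c : ℝ} (ha : 0 < a) (hc : 0 < c) (hac : a + c = 1) :
    ∑ j, (x j) ^ a * (y j) ^ c ≤ (∑ j, x j) ^ a * (∑ j, y j) ^ c := by
  have ha1 : a < 1 := by linarith
  have hpq : Real.HolderConjugate (1/a) (1/c) := by
    rw [Real.holderConjugate_iff]
    constructor
    · rw [lt_div_iff₀ ha, one_mul]; linarith
    · field_simp; exact hac
  have h := Real.inner_le_Lp_mul_Lq_of_nonneg (f := fun j => x j ^ a) (g := fun j => y j ^ c)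
    Finset.univ hpq (fun i _ => Real.rpow_nonneg (hx i) a) (fun i _ => Real.rpow_nonneg (hy i) c)
  have e1 : ∀ j, (x j ^ a) ^ (1/a : ℝ) = x j := by
    intro j; rw [← Real.rpow_mul (hx j)]; rw [mul_one_div, div_self ha.ne', Real.rpow_one]
  have e2 : ∀ j, (y j ^ c) ^ (1/c : ℝ) = y j := by
    intro j; rw [← Real.rpow_mul (hy j)]; rw [mul_one_div, div_self hc.ne', Real.rpow_one]
  simp only [one_div_one_div, e1, e2] at h
  exact h

lemma power_sum_aux {J : ℕ} (x : Fin J → ℝ) (hx : ∀ j, 0 ≤ x j)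
    {a c : ℝ} (ha : 0 < a) (hc : 0 < c) (hac : a + c = 1) :
    ∑ j, (x j) ^ a ≤ (∑ j, x j) ^ a * (J : ℝ) ^ c := by
  have h := holder_aux x (fun _ => (1:ℝ)) hx (fun _ => zero_le_one) ha hc hac
  simpa [Finset.card_univ] using h

/-- (Deterministic aggregation step of Theorem 5.4, α = −2 case, total-variation budget.)
Segments of lengths b_j (summing to T) with scaled nonstationarities d_j (summing to at most D),
whose number satisfies J ≤ C'·T^{1/5}·D'^{4/5}, have per-segment regrets
R_j ≤ C(b_j^{3/4} + c₂ min{b_j^{2/3} d_j^{1/3}, b_j^{5/8} d_j^{1/2}} + (c₁ + c₂^{3/2}) b_j^{1/2})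
which aggregate, via Hölder's inequality, to the stated total regret bound. -/
theorem stmt_15 (T : ℝ) (hT : 0 < T) (J : ℕ) (hJpos : 0 < J)
    (b d : Fin J → ℝ) (hb : ∀ j, 0 < b j) (hd : ∀ j, 0 ≤ d j)
    (hbT : ∑ j, b j = T) (D : ℝ) (hD : 0 ≤ D) (hdD : ∑ j, d j ≤ D)
    (C C' c₁ c₂ D' : ℝ) (hC : 0 ≤ C) (hC' : 0 ≤ C') (hc₁ : 0 ≤ c₁) (hc₂ : 0 ≤ c₂)
    (hD' : 0 ≤ D')
    (hJ : (J : ℝ) ≤ C' * T ^ ((1 : ℝ) / 5) * D' ^ ((4 : ℝ) / 5))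
    (R : Fin J → ℝ) (hR0 : ∀ j, 0 ≤ R j)
    (hR : ∀ j, R j ≤ C * ((b j) ^ ((3 : ℝ) / 4)
      + c₂ * min ((b j) ^ ((2 : ℝ) / 3) * (d j) ^ ((1 : ℝ) / 3))
          ((b j) ^ ((5 : ℝ) / 8) * (d j) ^ ((1 : ℝ) / 2))
      + (c₁ + c₂ ^ ((3 : ℝ) / 2)) * (b j) ^ ((1 : ℝ) / 2))) :
    ∑ j, R j ≤ C * (C' ^ ((1 : ℝ) / 4) * D' ^ ((1 : ℝ) / 5) * T ^ ((4 : ℝ) / 5)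
      + c₂ * min (D ^ ((1 : ℝ) / 3) * T ^ ((2 : ℝ) / 3)) (D ^ ((1 : ℝ) / 2) * T ^ ((5 : ℝ) / 8))
      + (c₁ + c₂ ^ ((3 : ℝ) / 2)) * C' ^ ((1 : ℝ) / 2) * D' ^ ((2 : ℝ) / 5) * T ^ ((3 : ℝ) / 5)) := by
  have hdsum : (0:ℝ) ≤ ∑ j, d j := Finset.sum_nonneg (fun j _ => hd j)
  have hbj : ∀ j, b j ≤ T := by
    intro j
    rw [← hbT]
    exact Finset.single_le_sum (fun i _ => (hb i).le) (Finset.mem_univ j)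
  -- J powers
  have hJr : ∀ e : ℝ, 0 < e → (J:ℝ) ^ e ≤ (C' * T ^ ((1:ℝ)/5) * D' ^ ((4:ℝ)/5)) ^ e :=
    fun e he => Real.rpow_le_rpow (Nat.cast_nonneg J) hJ he.le
  have hprod : ∀ e : ℝ, 0 ≤ e → (C' * T ^ ((1:ℝ)/5) * D' ^ ((4:ℝ)/5)) ^ e
      = C' ^ e * T ^ ((1:ℝ)/5 * e) * D' ^ ((4:ℝ)/5 * e) := by
    intro e he
    rw [Real.mul_rpow (by positivity) (by positivity), Real.mul_rpow hC' (by positivity),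
      ← Real.rpow_mul hT.le, ← Real.rpow_mul hD']
  -- H1
  have H1 : ∑ j, (b j) ^ ((3:ℝ)/4) ≤ C' ^ ((1:ℝ)/4) * D' ^ ((1:ℝ)/5) * T ^ ((4:ℝ)/5) := by
    have h := power_sum_aux b (fun j => (hb j).le)
      (by norm_num : (0:ℝ) < 3/4) (by norm_num : (0:ℝ) < 1/4) (by norm_num)
    rw [hbT] at h
    refine h.trans ?_
    have hJ4 : (J:ℝ) ^ ((1:ℝ)/4) ≤ C' ^ ((1:ℝ)/4) * T ^ ((1:ℝ)/20) * D' ^ ((1:ℝ)/5) := by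
      refine (hJr _ (by norm_num)).trans_eq ?_
      rw [hprod _ (by norm_num)]; norm_num
    calc T ^ ((3:ℝ)/4) * (J:ℝ) ^ ((1:ℝ)/4)
        ≤ T ^ ((3:ℝ)/4) * (C' ^ ((1:ℝ)/4) * T ^ ((1:ℝ)/20) * D' ^ ((1:ℝ)/5)) :=
          mul_le_mul_of_nonneg_left hJ4 (by positivity)
      _ = C' ^ ((1:ℝ)/4) * D' ^ ((1:ℝ)/5) * (T ^ ((3:ℝ)/4) * T ^ ((1:ℝ)/20)) := by ring
      _ = C' ^ ((1:ℝ)/4) * D' ^ ((1:ℝ)/5) * T ^ ((4:ℝ)/5) := by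
          rw [← Real.rpow_add hT]; norm_num
  -- H3
  have H3 : ∑ j, (b j) ^ ((1:ℝ)/2) ≤ C' ^ ((1:ℝ)/2) * D' ^ ((2:ℝ)/5) * T ^ ((3:ℝ)/5) := by
    have h := power_sum_aux b (fun j => (hb j).le)
      (by norm_num : (0:ℝ) < 1/2) (by norm_num : (0:ℝ) < 1/2) (by norm_num)
    rw [hbT] at h
    refine h.trans ?_
    have hJ2 : (J:ℝ) ^ ((1:ℝ)/2) ≤ C' ^ ((1:ℝ)/2) * T ^ ((1:ℝ)/10) * D' ^ ((2:ℝ)/5) := by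
      refine (hJr _ (by norm_num)).trans_eq ?_
      rw [hprod _ (by norm_num)]; norm_num
    calc T ^ ((1:ℝ)/2) * (J:ℝ) ^ ((1:ℝ)/2)
        ≤ T ^ ((1:ℝ)/2) * (C' ^ ((1:ℝ)/2) * T ^ ((1:ℝ)/10) * D' ^ ((2:ℝ)/5)) :=
          mul_le_mul_of_nonneg_left hJ2 (by positivity)
      _ = C' ^ ((1:ℝ)/2) * D' ^ ((2:ℝ)/5) * (T ^ ((1:ℝ)/2) * T ^ ((1:ℝ)/10)) := by ring
      _ = C' ^ ((1:ℝ)/2) * D' ^ ((2:ℝ)/5) * T ^ ((3:ℝ)/5) := by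
          rw [← Real.rpow_add hT]; norm_num
  -- H2a
  have H2a : ∑ j, (b j) ^ ((2:ℝ)/3) * (d j) ^ ((1:ℝ)/3) ≤ D ^ ((1:ℝ)/3) * T ^ ((2:ℝ)/3) := by
    have h := holder_aux b d (fun j => (hb j).le) hd
      (by norm_num : (0:ℝ) < 2/3) (by norm_num : (0:ℝ) < 1/3) (by norm_num)
    rw [hbT] at h
    refine h.trans ?_
    rw [mul_comm]
    exact mul_le_mul_of_nonneg_right
      (Real.rpow_le_rpow hdsum hdD (by norm_num)) (by positivity)
  -- H2b
  have H2b : ∑ j, (b j) ^ ((5:ℝ)/8) * (d j) ^ ((1:ℝ)/2) ≤ D ^ ((1:ℝ)/2) * T ^ ((5:ℝ)/8) := by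
    have step : ∀ j, (b j) ^ ((5:ℝ)/8) * (d j) ^ ((1:ℝ)/2)
        ≤ T ^ ((1:ℝ)/8) * ((b j) ^ ((1:ℝ)/2) * (d j) ^ ((1:ℝ)/2)) := by
      intro j
      have e : (b j) ^ ((5:ℝ)/8) = (b j) ^ ((1:ℝ)/8) * (b j) ^ ((1:ℝ)/2) := by
        rw [← Real.rpow_add (hb j)]; norm_num
      rw [e]
      have : (b j) ^ ((1:ℝ)/8) ≤ T ^ ((1:ℝ)/8) :=
        Real.rpow_le_rpow (hb j).le (hbj j) (by norm_num)
      calc (b j) ^ ((1:ℝ)/8) * (b j) ^ ((1:ℝ)/2) * (d j) ^ ((1:ℝ)/2)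
          ≤ T ^ ((1:ℝ)/8) * (b j) ^ ((1:ℝ)/2) * (d j) ^ ((1:ℝ)/2) := by
            have h1 : (0:ℝ) ≤ (b j) ^ ((1:ℝ)/2) := Real.rpow_nonneg (hb j).le _
            have h2 : (0:ℝ) ≤ (d j) ^ ((1:ℝ)/2) := Real.rpow_nonneg (hd j) _
            exact mul_le_mul_of_nonneg_right (mul_le_mul_of_nonneg_right this h1) h2
        _ = T ^ ((1:ℝ)/8) * ((b j) ^ ((1:ℝ)/2) * (d j) ^ ((1:ℝ)/2)) := by ring
    calc ∑ j, (b j) ^ ((5:ℝ)/8) * (d j) ^ ((1:ℝ)/2)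
        ≤ ∑ j, T ^ ((1:ℝ)/8) * ((b j) ^ ((1:ℝ)/2) * (d j) ^ ((1:ℝ)/2)) :=
          Finset.sum_le_sum (fun j _ => step j)
      _ = T ^ ((1:ℝ)/8) * ∑ j, (b j) ^ ((1:ℝ)/2) * (d j) ^ ((1:ℝ)/2) := by
          rw [Finset.mul_sum]
      _ ≤ T ^ ((1:ℝ)/8) * (T ^ ((1:ℝ)/2) * (∑ j, d j) ^ ((1:ℝ)/2)) := by
          refine mul_le_mul_of_nonneg_left ?_ (by positivity)
          have h := holder_aux b d (fun j => (hb j).le) hd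
            (by norm_num : (0:ℝ) < 1/2) (by norm_num : (0:ℝ) < 1/2) (by norm_num)
          rwa [hbT] at h
      _ ≤ T ^ ((1:ℝ)/8) * (T ^ ((1:ℝ)/2) * D ^ ((1:ℝ)/2)) := by
          have hx : (∑ j, d j) ^ ((1:ℝ)/2) ≤ D ^ ((1:ℝ)/2) :=
            Real.rpow_le_rpow hdsum hdD (by norm_num)
          have h1 : (0:ℝ) ≤ T ^ ((1:ℝ)/2) := by positivity
          have h2 : (0:ℝ) ≤ T ^ ((1:ℝ)/8) := by positivity
          exact mul_le_mul_of_nonneg_left (mul_le_mul_of_nonneg_left hx h1) h2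
      _ = D ^ ((1:ℝ)/2) * (T ^ ((1:ℝ)/8) * T ^ ((1:ℝ)/2)) := by ring
      _ = D ^ ((1:ℝ)/2) * T ^ ((5:ℝ)/8) := by rw [← Real.rpow_add hT]; norm_num
  -- min bound
  have H2 : ∑ j, min ((b j) ^ ((2:ℝ)/3) * (d j) ^ ((1:ℝ)/3))
      ((b j) ^ ((5:ℝ)/8) * (d j) ^ ((1:ℝ)/2))
      ≤ min (D ^ ((1:ℝ)/3) * T ^ ((2:ℝ)/3)) (D ^ ((1:ℝ)/2) * T ^ ((5:ℝ)/8)) := by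
    refine le_min ((Finset.sum_le_sum (fun j _ => min_le_left _ _)).trans H2a)
      ((Finset.sum_le_sum (fun j _ => min_le_right _ _)).trans H2b)
  have hK : (0:ℝ) ≤ c₁ + c₂ ^ ((3:ℝ)/2) := by positivity
  calc ∑ j, R j ≤ ∑ j, C * ((b j) ^ ((3:ℝ)/4)
        + c₂ * min ((b j) ^ ((2:ℝ)/3) * (d j) ^ ((1:ℝ)/3))
            ((b j) ^ ((5:ℝ)/8) * (d j) ^ ((1:ℝ)/2))
        + (c₁ + c₂ ^ ((3:ℝ)/2)) * (b j) ^ ((1:ℝ)/2)) :=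
      Finset.sum_le_sum (fun j _ => hR j)
    _ = C * ((∑ j, (b j) ^ ((3:ℝ)/4))
        + c₂ * (∑ j, min ((b j) ^ ((2:ℝ)/3) * (d j) ^ ((1:ℝ)/3))
            ((b j) ^ ((5:ℝ)/8) * (d j) ^ ((1:ℝ)/2)))
        + (c₁ + c₂ ^ ((3:ℝ)/2)) * ∑ j, (b j) ^ ((1:ℝ)/2)) := by
      rw [← Finset.mul_sum]
      congr 1
      rw [Finset.sum_add_distrib, Finset.sum_add_distrib, ← Finset.mul_sum, ← Finset.mul_sum]
    _ ≤ C * (C' ^ ((1:ℝ)/4) * D' ^ ((1:ℝ)/5) * T ^ ((4:ℝ)/5)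
        + c₂ * min (D ^ ((1:ℝ)/3) * T ^ ((2:ℝ)/3)) (D ^ ((1:ℝ)/2) * T ^ ((5:ℝ)/8))
        + (c₁ + c₂ ^ ((3:ℝ)/2)) * (C' ^ ((1:ℝ)/2) * D' ^ ((2:ℝ)/5) * T ^ ((3:ℝ)/5))) := by
      refine mul_le_mul_of_nonneg_left ?_ hC
      exact add_le_add (add_le_add H1 (mul_le_mul_of_nonneg_left H2 hc₂))
        (mul_le_mul_of_nonneg_left H3 hK)
    _ = C * (C' ^ ((1:ℝ)/4) * D' ^ ((1:ℝ)/5) * T ^ ((4:ℝ)/5)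
        + c₂ * min (D ^ ((1:ℝ)/3) * T ^ ((2:ℝ)/3)) (D ^ ((1:ℝ)/2) * T ^ ((5:ℝ)/8))
        + (c₁ + c₂ ^ ((3:ℝ)/2)) * C' ^ ((1:ℝ)/2) * D' ^ ((2:ℝ)/5) * T ^ ((3:ℝ)/5)) := by
      ring
end
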